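/- arXiv:1803.00642 — 3 statements merged into one kernel-verified Lean document; each statement's English description precedes it below -/
import Mathlib

section
/- Let α ∈ (0,1), h > 0, n₀ > 0 and tol > 0. If A ≥ 1 satisfies A + (α/n₀) log A ≥ (1/n₀) log( h^{α−1} / (n₀ Γ(1−α) tol) ), then for every t ≥ n₀ h one has (1/Γ(1−α)) ∫_{A/h}^{∞} x^{−α} e^{−tx} dx ≤ tol. -/
open Real

theorem truncation_error_le_tol
    (α h tol A : ℝ) (n₀ : ℕ)
    (hα : α ∈ Set.Ioo (0 : ℝ) 1) (hh : 0 < h) (hn₀ : 0 < n₀) (htol : 0 < tol)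
    (hA : 1 ≤ A)
    (hA' : (1 / (n₀ : ℝ)) * Real.log (h ^ (α - 1) / ((n₀ : ℝ) * Real.Gamma (1 - α) * tol))
            ≤ A + (α / (n₀ : ℝ)) * Real.log A) :
    ∀ t : ℝ, (n₀ : ℝ) * h ≤ t →
      (1 / Real.Gamma (1 - α)) * (∫ x in Set.Ioi (A / h), x ^ (-α) * Real.exp (-t * x)) ≤ tol := by
  intro t ht
  obtain ⟨hα0, hα1⟩ := hα
  have hn₀' : (0 : ℝ) < n₀ := Nat.cast_pos.mpr hn₀
  have hΓ : 0 < Real.Gamma (1 - α) := Real.Gamma_pos_of_pos (by linarith)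
  have hA0 : (0 : ℝ) < A := by linarith
  set L : ℝ := A / h with hLdef
  have hL : 0 < L := div_pos hA0 hh
  have ht0 : 0 < t := lt_of_lt_of_le (by positivity) ht
  -- Step 1: bound the integrand
  have mono : (∫ x in Set.Ioi L, x ^ (-α) * Real.exp (-t * x))
      ≤ ∫ x in Set.Ioi L, L ^ (-α) * Real.exp (-t * x) := by
    apply MeasureTheory.integral_mono_of_nonneg
    · filter_upwards [MeasureTheory.ae_restrict_mem measurableSet_Ioi] with x hx
      have hx0 : 0 < x := lt_trans hL hx
      positivity
    · exact (exp_neg_integrableOn_Ioi L ht0).const_mul _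
    · filter_upwards [MeasureTheory.ae_restrict_mem measurableSet_Ioi] with x hx
      have h1 : x ^ (-α) ≤ L ^ (-α) :=
        Real.rpow_le_rpow_of_nonpos hL (le_of_lt hx) (by linarith)
      exact mul_le_mul_of_nonneg_right h1 (Real.exp_nonneg _)
  -- Step 2: compute the majorant integral
  have hint : (∫ x in Set.Ioi L, L ^ (-α) * Real.exp (-t * x))
      = L ^ (-α) * (Real.exp (-(t * L)) / t) := by
    rw [MeasureTheory.integral_const_mul]
    congr 1
    have := MeasureTheory.integral_comp_mul_left_Ioi (fun u : ℝ => Real.exp (-u)) L ht0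
    simp only [smul_eq_mul] at this
    rw [show (fun x : ℝ => Real.exp (-t * x)) = fun x : ℝ => Real.exp (-(t * x)) from by
      funext x; ring_nf]
    rw [this, integral_exp_neg_Ioi]
    rw [div_eq_inv_mul]
  -- Step 3: compare with t replaced by n₀ * h
  have step3 : Real.exp (-(t * L)) / t ≤ Real.exp (-((n₀ : ℝ) * h * L)) / ((n₀ : ℝ) * h) := by
    apply div_le_div₀ (Real.exp_nonneg _) _ (by positivity) ht
    apply Real.exp_le_exp.mpr
    have : (n₀ : ℝ) * h * L ≤ t * L := mul_le_mul_of_nonneg_right ht hL.le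
    linarith
  -- Step 4: final algebraic inequality from hA'
  have hnhL : (n₀ : ℝ) * h * L = (n₀ : ℝ) * A := by
    field_simp [hLdef]
    rw [hLdef]; field_simp
  have hx0 : 0 < h ^ (α - 1) / ((n₀ : ℝ) * Real.Gamma (1 - α) * tol) := by positivity
  have key0 : Real.log (h ^ (α - 1) / ((n₀ : ℝ) * Real.Gamma (1 - α) * tol))
      ≤ (n₀ : ℝ) * A + α * Real.log A := by
    have := mul_le_mul_of_nonneg_left hA' hn₀'.le
    rw [mul_add] at this
    calc Real.log (h ^ (α - 1) / ((n₀ : ℝ) * Real.Gamma (1 - α) * tol))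
        = (n₀ : ℝ) * ((1 / (n₀ : ℝ)) * Real.log (h ^ (α - 1) / ((n₀ : ℝ) * Real.Gamma (1 - α) * tol))) := by
          field_simp
      _ ≤ (n₀ : ℝ) * A + (n₀ : ℝ) * ((α / (n₀ : ℝ)) * Real.log A) := this
      _ = (n₀ : ℝ) * A + α * Real.log A := by field_simp
  have key : h ^ (α - 1) / ((n₀ : ℝ) * Real.Gamma (1 - α) * tol)
      ≤ Real.exp ((n₀ : ℝ) * A) * A ^ α := by
    have := (Real.log_le_iff_le_exp hx0).mp key0
    rwa [Real.exp_add, mul_comm α (Real.log A), ← Real.rpow_def_of_pos hA0] at this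
  have key2 : h ^ (α - 1) ≤ (n₀ : ℝ) * Real.Gamma (1 - α) * tol * (Real.exp ((n₀ : ℝ) * A) * A ^ α) := by
    rw [div_le_iff₀ (by positivity)] at key
    linarith [key]
  -- rewrite the target
  have hLpow : L ^ (-α) = A ^ (-α) * h ^ α := by
    rw [hLdef, Real.div_rpow hA0.le hh.le, Real.rpow_neg hh.le]
    rw [div_eq_mul_inv, inv_inv]
  calc (1 / Real.Gamma (1 - α)) * (∫ x in Set.Ioi L, x ^ (-α) * Real.exp (-t * x))
      ≤ (1 / Real.Gamma (1 - α)) * (L ^ (-α) * (Real.exp (-(t * L)) / t)) := by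
        rw [← hint]
        exact mul_le_mul_of_nonneg_left mono (by positivity)
    _ ≤ (1 / Real.Gamma (1 - α)) * (L ^ (-α) * (Real.exp (-((n₀ : ℝ) * A)) / ((n₀ : ℝ) * h))) := by
        rw [← hnhL]
        exact mul_le_mul_of_nonneg_left
          (mul_le_mul_of_nonneg_left step3 (by positivity)) (by positivity)
    _ = h ^ (α - 1) / ((n₀ : ℝ) * Real.Gamma (1 - α) * (Real.exp ((n₀ : ℝ) * A) * A ^ α)) := by
        rw [hLpow, Real.exp_neg, Real.rpow_neg hA0.le,
          show α - 1 = α + (-1) from by ring, Real.rpow_add hh, Real.rpow_neg_one]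
        have e1 : Real.exp ((n₀ : ℝ) * A) ≠ 0 := (Real.exp_pos _).ne'
        have e2 : A ^ α ≠ 0 := (Real.rpow_pos_of_pos hA0 α).ne'
        field_simp
    _ ≤ tol := by
        rw [div_le_iff₀ (by positivity)]
        calc h ^ (α - 1) ≤ (n₀ : ℝ) * Real.Gamma (1 - α) * tol * (Real.exp ((n₀ : ℝ) * A) * A ^ α) := key2
          _ = tol * ((n₀ : ℝ) * Real.Gamma (1 - α) * (Real.exp ((n₀ : ℝ) * A) * A ^ α)) := by ring
end

section
/- Let s ≥ 1, let 𝒜 ∈ ℂ^{s×s} be invertible, 𝐛 ∈ ℂ^s, 𝟙 = (1,…,1)ᵀ ∈ ℂ^s, and assume 𝐛ᵀ𝒜⁻¹𝟙 = 1. Fix z ∈ ℂ with I − z𝒜 invertible and set r(z) = 1 + z 𝐛ᵀ(I − z𝒜)⁻¹𝟙, 𝐪(z) = 𝐛ᵀ(I − z𝒜)⁻¹, Δ(ζ) = 𝒜⁻¹ − ζ 𝒜⁻¹𝟙𝐛ᵀ𝒜⁻¹, E₀(z) = 𝒜(I − z𝒜)⁻¹, and Eₙ(z) = r(z)^{n−1}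 (I − z𝒜)⁻¹𝟙 𝐪(z) for n ≥ 1. Then for every ζ ∈ ℂ with |ζ · r(z)| < 1, the series Σ_{n=0}^{∞} Eₙ(z) ζⁿ converges and (Δ(ζ) − zI) · Σ_{n=0}^{∞} Eₙ(z) ζⁿ = I; in particular Δ(ζ) − zI is invertible and (Δ(ζ) − zI)⁻¹ = Σ_{n=0}^{∞} Eₙ(z) ζⁿ. -/
open Matrix

/-- The stability function `r(z) = 1 + z bᵀ(I - zA)⁻¹𝟙` of a Runge--Kutta method. -/
noncomputable def rkStab {s : ℕ} (A : Matrix (Fin s) (Fin s) ℂ) (b : Fin s → ℂ) (z : ℂ) : ℂ :=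
  1 + z * (b ⬝ᵥ ((1 - z • A)⁻¹ *ᵥ (fun _ => 1)))

/-- The row vector `q(z) = bᵀ(I - zA)⁻¹`. -/
noncomputable def rkQ {s : ℕ} (A : Matrix (Fin s) (Fin s) ℂ) (b : Fin s → ℂ) (z : ℂ) :
    Fin s → ℂ :=
  Matrix.vecMul b (1 - z • A)⁻¹

/-- The matrices `E₀(z) = A(I - zA)⁻¹` and `Eₙ(z) = r(z)^{n-1}(I - zA)⁻¹𝟙 q(z)` for `n ≥ 1`. -/
noncomputable def rkE {s : ℕ} (A : Matrix (Fin s) (Fin s) ℂ) (b : Fin s → ℂ) (n : ℕ) (z : ℂ) :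
    Matrix (Fin s) (Fin s) ℂ :=
  if n = 0 then A * (1 - z • A)⁻¹
  else (rkStab A b z) ^ (n - 1) •
    Matrix.vecMulVec ((1 - z • A)⁻¹ *ᵥ (fun _ => 1)) (rkQ A b z)

private lemma mul_vecMulVec' {s : ℕ} (M : Matrix (Fin s) (Fin s) ℂ) (u v : Fin s → ℂ) :
    M * Matrix.vecMulVec u v = Matrix.vecMulVec (M *ᵥ u) v := by
  ext i j
  simp only [Matrix.mul_apply, Matrix.vecMulVec_apply, Matrix.mulVec, dotProduct,
    Finset.sum_mul]
  exact Finset.sum_congr rfl fun k _ => by ring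

private lemma vecMulVec_mul' {s : ℕ} (u v : Fin s → ℂ) (M : Matrix (Fin s) (Fin s) ℂ) :
    Matrix.vecMulVec u v * M = Matrix.vecMulVec u (v ᵥ* M) := by
  ext i j
  simp only [Matrix.mul_apply, Matrix.vecMulVec_apply, Matrix.vecMul, dotProduct,
    Finset.mul_sum]
  exact Finset.sum_congr rfl fun k _ => by ring

private lemma vecMulVec_mul_vecMulVec' {s : ℕ} (u v x y : Fin s → ℂ) :
    Matrix.vecMulVec u v * Matrix.vecMulVec x y
      = (v ⬝ᵥ x) • Matrix.vecMulVec u y := by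
  ext i j
  simp only [Matrix.mul_apply, Matrix.vecMulVec_apply, Matrix.smul_apply, dotProduct,
    smul_eq_mul]
  rw [Finset.sum_mul]
  exact Finset.sum_congr rfl fun k _ => by ring

theorem cq_symbol_resolvent_series
    (s : ℕ) (hs : 1 ≤ s)
    (A : Matrix (Fin s) (Fin s) ℂ) (hA : IsUnit A.det)
    (b : Fin s → ℂ)
    (hb : b ⬝ᵥ (A⁻¹ *ᵥ (fun _ => 1)) = 1)
    (z : ℂ) (hz : IsUnit (1 - z • A).det)
    (ζ : ℂ) (hζ : ‖ζ * rkStab A b z‖ < 1) :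
    ∃ S : Matrix (Fin s) (Fin s) ℂ,
      HasSum (fun n : ℕ => ζ ^ n • rkE A b n z) S ∧
      ((A⁻¹ - ζ • (A⁻¹ * Matrix.vecMulVec (fun _ => 1) b * A⁻¹)) - z • 1) * S = 1 ∧
      IsUnit ((A⁻¹ - ζ • (A⁻¹ * Matrix.vecMulVec (fun _ => 1) b * A⁻¹)) - z • 1).det ∧
      ((A⁻¹ - ζ • (A⁻¹ * Matrix.vecMulVec (fun _ => 1) b * A⁻¹)) - z • 1)⁻¹ = S := by
  set N : Matrix (Fin s) (Fin s) ℂ := (1 - z • A)⁻¹ with hN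
  set o : Fin s → ℂ := fun _ => 1 with ho
  set r : ℂ := rkStab A b z with hr
  set q : Fin s → ℂ := rkQ A b z with hq
  set u : Fin s → ℂ := N *ᵥ o with hu
  set W : Matrix (Fin s) (Fin s) ℂ := Matrix.vecMulVec u q with hW
  set V : Matrix (Fin s) (Fin s) ℂ := Matrix.vecMulVec (A⁻¹ *ᵥ o) q with hV
  set X : Matrix (Fin s) (Fin s) ℂ := A⁻¹ * Matrix.vecMulVec o b * A⁻¹ with hX
  set M : Matrix (Fin s) (Fin s) ℂ := (A⁻¹ - ζ • X) - z • 1 with hM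
  have h1 : (1 - z • A) * N = 1 := Matrix.mul_nonsing_inv _ hz
  have hA1 : A⁻¹ * A = 1 := Matrix.nonsing_inv_mul _ hA
  have key : A⁻¹ * (1 - z • A) = A⁻¹ - z • 1 := by
    rw [mul_sub, mul_one, Matrix.mul_smul, hA1]
  have keyN : (A⁻¹ - z • 1) * N = A⁻¹ := by
    rw [← key, mul_assoc, h1, mul_one]
  have hqdef : q = b ᵥ* N := rfl
  have hrval : r = 1 + z * (b ⬝ᵥ u) := rfl
  -- 1 - ζ r ≠ 0
  have hne : (1 : ℂ) - ζ * r ≠ 0 := by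
    intro h
    have h' : ζ * r = 1 := by linear_combination -h
    rw [h'] at hζ
    simp at hζ
  -- b ⬝ᵥ (A⁻¹ *ᵥ u) = r
  have hAu : A⁻¹ *ᵥ u = A⁻¹ *ᵥ o + z • u := by
    have hAN : A⁻¹ * N = A⁻¹ + z • N := by
      have h2 := keyN
      rw [sub_mul, Matrix.smul_mul, one_mul] at h2
      linear_combination (norm := module) h2
    rw [hu, Matrix.mulVec_mulVec, hAN, Matrix.add_mulVec, Matrix.smul_mulVec]
  have hbr : b ⬝ᵥ (A⁻¹ *ᵥ u) = r := by
    rw [hAu, dotProduct_add, hb, dotProduct_smul, hrval, smul_eq_mul]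
  -- expansion of M * Y
  have hMmul : ∀ Y : Matrix (Fin s) (Fin s) ℂ,
      M * Y = (A⁻¹ - z • 1) * Y - ζ • (X * Y) := by
    intro Y
    rw [hM]
    simp only [sub_mul, Matrix.smul_mul]
    abel
  -- M * E₀
  have hME0 : M * (A * N) = 1 - ζ • V := by
    rw [hMmul]
    have e1 : (A⁻¹ - z • 1) * (A * N) = 1 := by
      rw [← mul_assoc, sub_mul, Matrix.smul_mul, one_mul, hA1, h1]
    have e2 : X * (A * N) = V := by
      rw [hX, mul_assoc _ A⁻¹ _, ← mul_assoc A⁻¹ A N, hA1, one_mul, mul_assoc,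
        vecMulVec_mul', mul_vecMulVec', hV, hqdef]
    rw [e1, e2]
  -- M * W
  have hMW : M * W = (1 - ζ * r) • V := by
    rw [hMmul]
    have e1 : (A⁻¹ - z • 1) * W = V := by
      rw [hW, mul_vecMulVec', hV, hu, Matrix.mulVec_mulVec, keyN]
    have e2 : X * W = r • V := by
      rw [hX, hW, mul_assoc, mul_vecMulVec', mul_vecMulVec', vecMulVec_mul_vecMulVec', hbr]
    rw [e1, e2, smul_smul, sub_smul, one_smul]
  -- the sum
  set S : Matrix (Fin s) (Fin s) ℂ := (ζ * (1 - ζ * r)⁻¹) • W + A * N with hS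
  have hgeo : HasSum (fun n : ℕ => (ζ * r) ^ n) (1 - ζ * r)⁻¹ :=
    hasSum_geometric_of_norm_lt_one hζ
  have htail : HasSum (fun n : ℕ => ζ ^ (n + 1) • rkE A b (n + 1) z)
      ((ζ * (1 - ζ * r)⁻¹) • W) := by
    have h2 := (hgeo.mul_left ζ).smul_const W
    convert h2 using 2 with n
    simp only [rkE, Nat.succ_ne_zero, if_false, Nat.add_sub_cancel, ← hr, ← hq, ← hN, ← ho,
      ← hu, ← hW]
    rw [smul_smul, mul_pow]
    ring_nf
  have hsum : HasSum (fun n : ℕ => ζ ^ n • rkE A b n z) S := by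
    have := (hasSum_nat_add_iff (f := fun n : ℕ => ζ ^ n • rkE A b n z) 1).mp htail
    simpa [rkE, hS, ← hN] using this
  have hMS : M * S = 1 := by
    rw [hS, mul_add, Matrix.mul_smul, hMW, hME0, smul_smul,
      mul_assoc, inv_mul_cancel₀ hne, mul_one]
    abel
  exact ⟨S, hsum, hMS, Matrix.isUnit_det_of_right_inverse hMS, Matrix.inv_eq_right_inv hMS⟩
end

section
/- Let H be a complex inner product space, let δ ∈ (0, π/2], and let w ∈ ℂ, w ≠ 0, with |arg w| ≤ π − δ. Suppose u, f ∈ H and s ∈ ℝ with s ≥ 0 satisfy w·‖u‖² + s = ⟨f, u⟩ (the inner product of f and u). Then |w|·‖u‖ ≤ (2/sin δ)·‖f‖. -/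
open Real

lemma key_sector (δ : ℝ) (hδ : δ ∈ Set.Ioc 0 (π / 2)) (z : ℂ) (hz : z ≠ 0)
    (harg : |Complex.arg z| ≤ π - δ) (s : ℝ) (hs : 0 ≤ s) :
    Real.sin δ * ‖z‖ ≤ ‖z + s‖ := by
  obtain ⟨hδ0, hδ2⟩ := hδ
  have hsδ1 : Real.sin δ ≤ 1 := Real.sin_le_one δ
  have hsδ0 : 0 < Real.sin δ := Real.sin_pos_of_pos_of_lt_pi hδ0 (by linarith [Real.pi_gt_three])
  rcases le_or_gt 0 z.re with hre | hre
  · have h1 : (‖z‖)^2 ≤ (‖z + s‖)^2 := by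
      rw [Complex.sq_norm, Complex.sq_norm, Complex.normSq_apply, Complex.normSq_apply]
      simp only [Complex.add_re, Complex.add_im, Complex.ofReal_re, Complex.ofReal_im]
      nlinarith
    have h2 : ‖z‖ ≤ ‖z + s‖ :=
      (pow_le_pow_iff_left₀ (norm_nonneg _) (norm_nonneg _) two_ne_zero).mp h1
    nlinarith [norm_nonneg z]
  · -- Re z < 0, so |arg z| > π/2, sin|arg z| ≥ sin(π-δ) = sin δ
    have hargz : π / 2 < |Complex.arg z| := by
      by_contra h
      push_neg at h
      have := Complex.abs_arg_le_pi_div_two_iff.mp h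
      linarith
    have hsin : Real.sin δ ≤ Real.sin |Complex.arg z| := by
      rw [show Real.sin |Complex.arg z| = Real.sin (π - |Complex.arg z|) from (Real.sin_pi_sub _).symm]
      exact Real.sin_le_sin_of_le_of_le_pi_div_two (by linarith) (by linarith) (by linarith)
    have him : |z.im| = Real.sin |Complex.arg z| * ‖z‖ := by
      have h := Complex.sin_arg z
      have habs : ‖z‖ ≠ 0 := norm_ne_zero_iff.mpr hz
      have : z.im = Real.sin (Complex.arg z) * ‖z‖ := by
        rw [h, div_mul_cancel₀ _ habs]
      rw [this, abs_mul, abs_of_nonneg (norm_nonneg z)]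
      congr 1
      rcases le_or_gt 0 (Complex.arg z) with h0 | h0
      · rw [abs_of_nonneg h0, abs_of_nonneg]
        exact Real.sin_nonneg_of_nonneg_of_le_pi h0 (Complex.arg_le_pi z)
      · rw [abs_of_neg h0, Real.sin_neg, abs_of_nonpos]
        apply Real.sin_nonpos_of_nonpos_of_neg_pi_le (le_of_lt h0) (le_of_lt (Complex.neg_pi_lt_arg z))
    have h3 : |(z + s).im| ≤ ‖z + s‖ := Complex.abs_im_le_norm _
    have h4 : (z + (s:ℂ)).im = z.im := by simp
    rw [h4] at h3
    calc Real.sin δ * ‖z‖ ≤ Real.sin |Complex.arg z| * ‖z‖ := by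
          nlinarith [norm_nonneg z]
      _ = |z.im| := him.symm
      _ ≤ ‖z + s‖ := h3

theorem resolvent_estimate_abstract
    {H : Type*} [NormedAddCommGroup H] [InnerProductSpace ℂ H]
    (δ : ℝ) (hδ : δ ∈ Set.Ioc 0 (π / 2))
    (w : ℂ) (hw : w ≠ 0) (harg : |Complex.arg w| ≤ π - δ)
    (u f : H) (s : ℝ) (hs : 0 ≤ s)
    (heq : w * ((‖u‖ : ℂ)) ^ 2 + (s : ℂ) = inner ℂ f u) :
    ‖w‖ * ‖u‖ ≤ (2 / Real.sin δ) * ‖f‖ := by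
  have hsδ0 : 0 < Real.sin δ :=
    Real.sin_pos_of_pos_of_lt_pi hδ.1 (by linarith [Real.pi_gt_three, hδ.2])
  rcases eq_or_ne u 0 with hu | hu
  · simp [hu]
    positivity
  · have hnu : (0:ℝ) < ‖u‖ := norm_pos_iff.mpr hu
    set z : ℂ := w * ((‖u‖ : ℂ)) ^ 2 with hzdef
    have hzne : z ≠ 0 := by
      exact mul_ne_zero hw (pow_ne_zero 2 (by exact_mod_cast hnu.ne'))
    have hargz : Complex.arg z = Complex.arg w := by
      have : z = ((‖u‖^2 : ℝ) : ℂ) * w := by rw [hzdef]; push_cast; ring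
      rw [this, Complex.arg_real_mul w (by positivity)]
    have hkey := key_sector δ hδ z hzne (by rw [hargz]; exact harg) s hs
    have habsz : ‖z‖ = ‖w‖ * ‖u‖^2 := by
      rw [hzdef, norm_mul]
      simp [Complex.norm_real, abs_of_nonneg (norm_nonneg u), sq_abs]
    have hrhs : ‖z + s‖ ≤ ‖f‖ * ‖u‖ := by
      rw [hzdef, heq]
      exact norm_inner_le_norm f u
    rw [habsz] at hkey
    have h1 : Real.sin δ * (‖w‖ * ‖u‖ ^ 2) ≤ ‖f‖ * ‖u‖ := le_trans hkey hrhs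
    rw [div_mul_eq_mul_div, le_div_iff₀ hsδ0]
    nlinarith [norm_nonneg w, norm_nonneg f]
end
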